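/- arXiv:1503.07926 — 7 statements merged into one kernel-verified Lean document; each statement's English description precedes it below -/
import Mathlib

section
/- For every positive integer $n$, the $n\times n$ real symmetric matrix $M_n$ with entries $M_n(j,k) = \frac{1}{\sqrt{2\pi}}\,\frac{\Gamma(j+k-3/2)}{\sqrt{\Gamma(2j-1)\Gamma(2k-1)}}$ for $1\le j,k\le n$ is positive definite, i.e. for every nonzero vector $v \in \mathbb{R}^n$ one has $\langle v, M_n v\rangle > 0$. -/
/-- The `n × n` real symmetric matrix with entries
`M_n(j,k) = Γ(j+k-3/2) / (√(2π) √(Γ(2j-1) Γ(2k-1)))` for `1 ≤ j,k ≤ n`. -/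
noncomputable def ginibreM (n : ℕ) : Matrix (Fin n) (Fin n) ℝ :=
  Matrix.of fun j k =>
    (1 / Real.sqrt (2 * Real.pi)) *
      Real.Gamma (((j : ℕ) + 1 : ℝ) + ((k : ℕ) + 1 : ℝ) - 3 / 2) /
        Real.sqrt (Real.Gamma (2 * ((j : ℕ) + 1 : ℝ) - 1) *
          Real.Gamma (2 * ((k : ℕ) + 1 : ℝ) - 1))

/-!
`ginibreM n` is the Gram matrix in `L²(0, ∞)` of the functions
`φⱼ(x) = cⱼ xʲ · x^(-1/4) e^(-x/2)`, `cⱼ = (2π)^(-1/4) / √Γ(2j+1)` (indices from `0`), since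
`∫₀^∞ φⱼ φₖ = cⱼ cₖ Γ(j+k+1/2)` by Euler's integral. The quadratic form of a Gram matrix at `v` is
`∫ (∑ vⱼ φⱼ)²`, and `∑ vⱼ φⱼ` is the positive weight `x^(-1/4) e^(-x/2)` times a polynomial, which
is nonzero when `v ≠ 0`; so the integrand vanishes only at finitely many points of `(0, ∞)`.
-/

open MeasureTheory Polynomial Real Set
open scoped Matrix

theorem sq_sum_mul_eq_sum_sum {α ι : Type*} [Fintype ι] (f : ι → α → ℝ) (v : ι → ℝ) (x : α) :
    (∑ i, v i * f i x) ^ 2 = ∑ i, ∑ j, v i * v j * (f i x * f j x) := by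
  rw [sq, Finset.sum_mul_sum]
  exact Finset.sum_congr rfl fun i _ => Finset.sum_congr rfl fun j _ => by ring

section Gram

variable {α ι : Type*} [MeasurableSpace α] [Fintype ι] {μ : Measure α} {f : ι → α → ℝ}

theorem integrable_sq_sum_mul (hf : ∀ i j, Integrable (fun x => f i x * f j x) μ)
    (v : ι → ℝ) : Integrable (fun x => (∑ i, v i * f i x) ^ 2) μ := by
  simp_rw [sq_sum_mul_eq_sum_sum]
  exact integrable_finsetSum _ fun i _ =>
    integrable_finsetSum _ fun j _ => (hf i j).const_mul _

theorem dotProduct_mulVec_eq_integral_sq_of_gram {M : Matrix ι ι ℝ}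
    (hf : ∀ i j, Integrable (fun x => f i x * f j x) μ)
    (hM : ∀ i j, M i j = ∫ x, f i x * f j x ∂μ) (v : ι → ℝ) :
    v ⬝ᵥ (M *ᵥ v) = ∫ x, (∑ i, v i * f i x) ^ 2 ∂μ := by
  simp_rw [sq_sum_mul_eq_sum_sum]
  rw [integral_finsetSum _ fun i _ =>
    integrable_finsetSum _ fun j _ => (hf i j).const_mul _]
  refine Finset.sum_congr rfl fun i _ => ?_
  rw [integral_finsetSum _ fun j _ => (hf i j).const_mul _, Matrix.mulVec, dotProduct,
    Finset.mul_sum]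
  refine Finset.sum_congr rfl fun j _ => ?_
  rw [integral_const_mul, ← hM]
  ring

theorem dotProduct_mulVec_pos_of_gram {M : Matrix ι ι ℝ}
    (hf : ∀ i j, Integrable (fun x => f i x * f j x) μ)
    (hM : ∀ i j, M i j = ∫ x, f i x * f j x ∂μ) {v : ι → ℝ}
    (hv : 0 < μ (Function.support fun x => ∑ i, v i * f i x)) :
    0 < v ⬝ᵥ (M *ᵥ v) := by
  rwa [dotProduct_mulVec_eq_integral_sq_of_gram hf hM,
    integral_pos_iff_support_of_nonneg (fun x => sq_nonneg _) (integrable_sq_sum_mul hf v),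
    Function.support_pow _ two_ne_zero]

end Gram

namespace Ginibre

noncomputable def coeff (j : ℕ) : ℝ :=
  (2 * π) ^ (-(1 : ℝ) / 4) / √(Gamma (2 * j + 1))

noncomputable def weight (x : ℝ) : ℝ :=
  x ^ (-(1 : ℝ) / 4) * exp (-x / 2)

noncomputable def basisFun (j : ℕ) (x : ℝ) : ℝ :=
  coeff j * x ^ j * weight x

theorem coeff_pos (j : ℕ) : 0 < coeff j := by
  unfold coeff
  have : 0 < Gamma (2 * j + 1) := Gamma_pos_of_pos (by positivity)
  positivity

theorem basisFun_mul_basisFun {x : ℝ} (hx : 0 < x) (j k : ℕ) :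
    basisFun j x * basisFun k x =
      coeff j * coeff k * (exp (-x) * x ^ ((j + k + 1 / 2 : ℝ) - 1)) := by
  have hpow : x ^ j * x ^ k * (x ^ (-(1 : ℝ) / 4) * x ^ (-(1 : ℝ) / 4)) =
      x ^ ((j + k + 1 / 2 : ℝ) - 1) := by
    rw [← rpow_natCast, ← rpow_natCast, ← rpow_add hx, ← rpow_add hx, ← rpow_add hx]
    ring_nf
  have hexp : exp (-x / 2) * exp (-x / 2) = exp (-x) := by
    rw [← exp_add]; ring_nf
  unfold basisFun weight
  rw [← hpow, ← hexp]
  ring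

theorem integrableOn_basisFun_mul (j k : ℕ) :
    IntegrableOn (fun x => basisFun j x * basisFun k x) (Ioi 0) :=
  IntegrableOn.congr_fun
    ((GammaIntegral_convergent (by positivity : (0 : ℝ) < j + k + 1 / 2)).const_mul _)
    (fun _ hx => (basisFun_mul_basisFun hx j k).symm) measurableSet_Ioi

theorem ginibreM_apply_eq_integral {n : ℕ} (j k : Fin n) :
    ginibreM n j k = ∫ x in Ioi 0, basisFun j x * basisFun k x := by
  rw [setIntegral_congr_fun measurableSet_Ioi fun _ hx => basisFun_mul_basisFun hx j k,
    integral_const_mul, ← Gamma_eq_integral (by positivity)]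
  have hΓ : ∀ i : ℕ, 0 ≤ Gamma (2 * (i + 1 : ℝ) - 1) := fun i =>
    (Gamma_pos_of_pos (by linarith [(Nat.cast_nonneg i : (0 : ℝ) ≤ i)])).le
  have hπ : (2 * π) ^ (-(1 : ℝ) / 4) * (2 * π) ^ (-(1 : ℝ) / 4) = 1 / √(2 * π) := by
    rw [← rpow_add (by positivity), sqrt_eq_rpow, one_div, ← rpow_neg (by positivity)]
    norm_num
  have hcoeff : ∀ i : ℕ, coeff i = (2 * π) ^ (-(1 : ℝ) / 4) / √(Gamma (2 * (i + 1 : ℝ) - 1)) :=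
    fun i => by rw [coeff]; ring_nf
  rw [ginibreM, Matrix.of_apply, sqrt_mul (hΓ j), hcoeff, hcoeff, div_mul_div_comm, hπ]
  ring_nf

theorem sum_mul_basisFun_eq {n : ℕ} (v : Fin n → ℝ) (x : ℝ) :
    ∑ j : Fin n, v j * basisFun j x =
      weight x * (ofFn n fun j => v j * coeff j).eval x := by
  rw [ofFn_eq_sum_monomial, eval_finsetSum, Finset.mul_sum]
  refine Finset.sum_congr rfl fun j _ => ?_
  rw [eval_monomial, basisFun]
  ring

theorem volume_support_sum_mul_basisFun_pos {n : ℕ} {v : Fin n → ℝ} (hv : v ≠ 0) :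
    0 < volume.restrict (Ioi 0) (Function.support fun x => ∑ j : Fin n, v j * basisFun j x) := by
  set p := ofFn n fun j => v j * coeff j
  have hp : p ≠ 0 := by
    rw [← (ofFn n).map_zero]
    refine (injective_ofFn n).ne fun h => hv (funext fun j => ?_)
    simpa [(coeff_pos j).ne'] using congr_fun h j
  have hsub : Ioi 0 \ {x | p.IsRoot x} ⊆
      (Function.support fun x => ∑ j : Fin n, v j * basisFun j x) ∩ Ioi 0 := by
    rintro x ⟨hx, hroot⟩
    refine ⟨?_, hx⟩
    have hx : 0 < x := hx
    rw [Function.mem_support, sum_mul_basisFun_eq]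
    exact mul_ne_zero (by unfold weight; positivity) hroot
  rw [Measure.restrict_apply' measurableSet_Ioi]
  refine lt_of_lt_of_le ?_ (measure_mono hsub)
  rw [measure_sdiff_null ((finite_setOfPred_isRoot hp).measure_zero _), volume_Ioi]
  exact ENNReal.zero_lt_top

end Ginibre

open Ginibre in
theorem stmt3_general (n : ℕ) :
    ∀ v : Fin n → ℝ, v ≠ 0 → 0 < dotProduct v ((ginibreM n).mulVec v) := fun _ hv =>
  dotProduct_mulVec_pos_of_gram (f := fun j : Fin n => basisFun j) (fun j k => integrableOn_basisFun_mul j k)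
    ginibreM_apply_eq_integral (volume_support_sum_mul_basisFun_pos hv)

theorem stmt3 (n : ℕ) (hn : 0 < n) :
    ∀ v : Fin n → ℝ, v ≠ 0 → 0 < dotProduct v ((ginibreM n).mulVec v) :=
  stmt3_general n
end

section
/- Let $M_n$ be the $n\times n$ real symmetric matrix with entries $M_n(j,k) = \frac{1}{\sqrt{2\pi}}\,\frac{\Gamma(j+k-3/2)}{\sqrt{\Gamma(2j-1)\Gamma(2k-1)}}$ for $1\le j,k\le n$. There exist a constant $\mu > 0$ and a natural number $N$ such that for every $n > N$, every eigenvalue $\lambda$ of $M_n$ satisfies $\lambda \le 1 - \mu/n$; in particular the largest eigenvalue $\lambda_{\max}(n)$ of $M_n$ satisfies $\lambda_{\max}(n) \le 1 - \mu/n$. -/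
open MeasureTheory Set Finset



/-- Partial sums of the Gamma binomial series. -/
lemma gammaSeries_le (s x : ℝ) (hs : 0 < s) (hx : 0 < x) (hx1 : x < 1) (n : ℕ) :
    ∑ m ∈ Finset.range n, Real.Gamma (s + m) * x ^ m / m.factorial ≤
      (1 / (1 - x)) ^ (s : ℝ) * Real.Gamma s := by
  have h1x : 0 < 1 - x := by linarith
  -- integrability of each term
  have hint : ∀ m : ℕ, IntegrableOn
      (fun t : ℝ => x ^ m / m.factorial * (Real.exp (-t) * t ^ (s + m - 1))) (Ioi 0) := by
    intro m
    exact (Real.GammaIntegral_convergent (by positivity : (0:ℝ) < s + m)).const_mul _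
  -- the sum equals an integral
  have hsum : ∑ m ∈ Finset.range n, Real.Gamma (s + m) * x ^ m / m.factorial =
      ∫ t in Ioi (0:ℝ), ∑ m ∈ Finset.range n,
        x ^ m / m.factorial * (Real.exp (-t) * t ^ (s + m - 1)) := by
    rw [integral_finset_sum _ (fun m _ => hint m)]
    refine Finset.sum_congr rfl fun m _ => ?_
    rw [MeasureTheory.integral_const_mul, ← Real.Gamma_eq_integral (by positivity)]
    ring
  rw [hsum]
  -- integrability of the dominating function
  have hg : IntegrableOn (fun t : ℝ => Real.exp (-((1 - x) * t)) * t ^ (s - 1)) (Ioi 0) := by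
    have h : IntegrableOn
        (fun t : ℝ => Real.exp (-((1 - x) * t)) * ((1 - x) * t) ^ (s - 1)) (Ioi 0) := by
      have := (integrableOn_Ioi_comp_mul_left_iff
        (fun t : ℝ => Real.exp (-t) * t ^ (s - 1)) 0 h1x).2
        (by simpa using Real.GammaIntegral_convergent hs)
      simpa using this
    have h2 := h.const_mul ((1 - x) ^ (1 - s : ℝ))
    refine MeasureTheory.IntegrableOn.congr_fun h2 (fun t ht => ?_) measurableSet_Ioi
    have ht' : (0:ℝ) < t := ht
    rw [Real.mul_rpow h1x.le ht'.le]
    rw [show (1 - x) ^ (s - 1 : ℝ) = ((1-x) ^ (1 - s :ℝ))⁻¹ by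
      rw [← Real.rpow_neg h1x.le]; ring_nf]
    field_simp
  calc ∫ t in Ioi (0:ℝ), ∑ m ∈ Finset.range n,
        x ^ m / m.factorial * (Real.exp (-t) * t ^ (s + m - 1))
      ≤ ∫ t in Ioi (0:ℝ), Real.exp (-((1 - x) * t)) * t ^ (s - 1) := by
        refine setIntegral_mono_on (integrable_finset_sum _ (fun m _ => hint m)) hg
          measurableSet_Ioi (fun t ht => ?_)
        have ht' : (0:ℝ) < t := ht
        have hpow : ∀ m : ℕ, t ^ (s + m - 1) = t ^ (s - 1) * t ^ m := by
          intro m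
          rw [← Real.rpow_natCast t m, ← Real.rpow_add ht']
          ring_nf
        calc ∑ m ∈ Finset.range n, x ^ m / m.factorial * (Real.exp (-t) * t ^ (s + m - 1))
            = Real.exp (-t) * t ^ (s - 1) * ∑ m ∈ Finset.range n, (x * t) ^ m / m.factorial := by
              rw [Finset.mul_sum]
              refine Finset.sum_congr rfl fun m _ => ?_
              rw [hpow m, mul_pow]
              ring
          _ ≤ Real.exp (-t) * t ^ (s - 1) * Real.exp (x * t) := by
              have := Real.sum_le_exp_of_nonneg (by positivity : (0:ℝ) ≤ x * t) n
              have hnn : (0:ℝ) ≤ Real.exp (-t) * t ^ (s - 1) := by positivity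
              exact mul_le_mul_of_nonneg_left this hnn
          _ = Real.exp (-((1 - x) * t)) * t ^ (s - 1) := by
              rw [mul_comm (Real.exp (-t)) _, mul_assoc, ← Real.exp_add]
              ring_nf
    _ = (1 / (1 - x)) ^ (s : ℝ) * Real.Gamma s := by
        rw [← Real.integral_rpow_mul_exp_neg_mul_Ioi hs h1x]
        refine setIntegral_congr_fun measurableSet_Ioi (fun t ht => ?_)
        ring

/-- Legendre duplication specialised at half integers. -/
lemma dup_fact (j : ℕ) :
    Real.Gamma ((j : ℝ) + 1 / 2) * (j.factorial : ℝ) * (4 : ℝ) ^ j =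
      ((2 * j).factorial : ℝ) * Real.sqrt Real.pi := by
  have h := Real.Gamma_mul_Gamma_add_half ((j : ℝ) + 1 / 2)
  have h1 : (j : ℝ) + 1 / 2 + 1 / 2 = ((j : ℕ) : ℝ) + 1 := by ring
  have h2 : 2 * ((j : ℝ) + 1 / 2) = ((2 * j : ℕ) : ℝ) + 1 := by push_cast; ring
  rw [h1, h2, Real.Gamma_nat_eq_factorial, Real.Gamma_nat_eq_factorial,
    show (1 : ℝ) - (((2 * j : ℕ) : ℝ) + 1) = -(2 * j : ℕ) by push_cast; ring] at h
  have h3 : ((2 : ℝ) ^ (-(2 * j : ℕ) : ℝ)) = ((4 : ℝ) ^ j)⁻¹ := by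
    rw [Real.rpow_neg (by norm_num), Real.rpow_natCast]
    congr 1
    rw [pow_mul]
    norm_num
  rw [h3] at h
  have h4 : (0:ℝ) < 4 ^ j := by positivity
  field_simp at h ⊢
  linarith [h]

/-- The scalar inequality. -/
lemma scalar_ineq (n j : ℕ) (hn : 0 < n) (hj : j < n) :
    1 ≤ (1 - 1 / (100 * (n : ℝ))) * Real.sqrt (1 + 1 / (4 * (n : ℝ))) *
        (1 - (1 / (4 * (n : ℝ))) ^ 2) ^ j := by
  have hc : ((n - 1 : ℕ) : ℝ) = (n : ℝ) - 1 := by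
    rw [Nat.cast_sub hn]; norm_num
  obtain ⟨N, hN⟩ : ∃ N : ℝ, ((n : ℕ) : ℝ) = N := ⟨_, rfl⟩
  rw [hN] at hc ⊢
  have hN1 : 1 ≤ N := by rw [← hN]; exact_mod_cast hn
  have hN0 : 0 < N := by linarith
  have hε0 : (0:ℝ) < 1 / (4 * N) := by positivity
  have hε4 : 1 / (4 * N) ≤ 1 / 4 := by
    rw [div_le_div_iff₀ (by positivity) (by norm_num)]; linarith
  set ε : ℝ := 1 / (4 * N) with hε
  set h : ℝ := 1 / N with hh
  have hh0 : 0 < h := by positivity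
  have hh1 : h ≤ 1 := by rw [hh, div_le_one hN0]; linarith
  have hεh : ε = h / 4 := by rw [hε, hh]; ring
  have A : 1 + h / 12 ≤ Real.sqrt (1 + ε) := by
    have h2 : (1 + h / 12) ^ 2 ≤ 1 + ε := by rw [hεh]; nlinarith
    nlinarith [Real.sq_sqrt (by positivity : (0:ℝ) ≤ 1 + ε),
      Real.sqrt_nonneg (1 + ε), h2]
  have hε21 : (0:ℝ) ≤ 1 - ε ^ 2 := by nlinarith
  have B1 : (1 - ε ^ 2) ^ (n - 1) ≤ (1 - ε ^ 2) ^ j :=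
    pow_le_pow_of_le_one hε21 (by nlinarith) (by omega)
  have B2 : 1 - (N - 1) * ε ^ 2 ≤ (1 - ε ^ 2) ^ (n - 1) := by
    have h5 := one_add_mul_le_pow (a := -ε ^ 2) (by nlinarith) (n - 1)
    rw [show (1 : ℝ) + -ε ^ 2 = 1 - ε ^ 2 by ring, hc] at h5
    nlinarith [h5]
  have B3 : 1 - h / 16 ≤ 1 - (N - 1) * ε ^ 2 := by
    have hNh : N * h = 1 := by rw [hh]; field_simp
    have : (N - 1) * (h / 4) ^ 2 ≤ h / 16 := by nlinarith
    rw [hεh]; linarith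
  have B : 1 - h / 16 ≤ (1 - ε ^ 2) ^ j := le_trans B3 (le_trans B2 B1)
  have hB0 : (0:ℝ) ≤ 1 - h / 16 := by linarith
  have hr0 : (0:ℝ) < 1 - 1 / (100 * N) := by
    have : 1 / (100 * N) ≤ 1 / 100 := by
      rw [div_le_div_iff₀ (by positivity) (by norm_num)]; linarith
    linarith
  have h100 : 1 / (100 * N) = h / 100 := by rw [hh]; ring
  have key : 1 ≤ (1 - 1 / (100 * N)) * ((1 + h / 12) * (1 - h / 16)) := by
    rw [h100]; nlinarith [hh0.le, hh1, sq_nonneg h, sq_nonneg (1 - h)]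
  calc (1:ℝ) ≤ (1 - 1 / (100 * N)) * ((1 + h / 12) * (1 - h / 16)) := key
    _ ≤ (1 - 1 / (100 * N)) * (Real.sqrt (1 + ε) * (1 - ε ^ 2) ^ j) := by
        refine mul_le_mul_of_nonneg_left ?_ hr0.le
        exact mul_le_mul A B hB0 (Real.sqrt_nonneg _)
    _ = (1 - 1 / (100 * N)) * Real.sqrt (1 + ε) * (1 - ε ^ 2) ^ j := by ring
lemma eig_le_of_weights {n : ℕ} (M : Matrix (Fin n) (Fin n) ℝ)
    (hM : ∀ i k, 0 ≤ M i k) (u : Fin n → ℝ) (hu : ∀ i, 0 < u i) (r : ℝ)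
    (hr : ∀ i, ∑ k, M i k * u k ≤ r * u i) :
    ∀ lam ∈ spectrum ℝ M, lam ≤ r := by
  intro lam hlam
  rw [spectrum.mem_iff] at hlam
  have hdet : (lam • (1 : Matrix (Fin n) (Fin n) ℝ) - M).det = 0 := by
    by_contra hne
    exact hlam (by
      rw [Algebra.algebraMap_eq_smul_one]
      exact (Matrix.isUnit_iff_isUnit_det _).2 (isUnit_iff_ne_zero.2 hne))
  obtain ⟨v, hv0, hv⟩ := (Matrix.exists_mulVec_eq_zero_iff).2 hdet
  have hMv : M.mulVec v = lam • v := by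
    have := hv
    rw [Matrix.sub_mulVec, Matrix.smul_mulVec, Matrix.one_mulVec, sub_eq_zero] at this
    exact this.symm
  obtain ⟨i1, hi1⟩ : ∃ i, v i ≠ 0 := Function.ne_iff.1 hv0
  obtain ⟨i0, -, hi0⟩ := Finset.exists_max_image Finset.univ (fun i => |v i| / u i)
    ⟨i1, Finset.mem_univ i1⟩
  have hvi0 : 0 < |v i0| := by
    have h1 : 0 < |v i1| / u i1 := div_pos (abs_pos.2 hi1) (hu i1)
    have h2 := hi0 i1 (Finset.mem_univ i1)
    have h3 : 0 < |v i0| / u i0 := lt_of_lt_of_le h1 h2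
    have h4 := mul_pos h3 (hu i0)
    rwa [div_mul_cancel₀ _ (hu i0).ne'] at h4
  set t : ℝ := |v i0| / u i0 with ht
  have htu : ∀ k, |v k| ≤ t * u k := fun k => by
    have := hi0 k (Finset.mem_univ k)
    rw [div_le_iff₀ (hu k)] at this
    linarith [this]
  have htui0 : t * u i0 = |v i0| := by
    rw [ht, div_mul_cancel₀ _ (hu i0).ne']
  have key : |lam| * |v i0| ≤ r * |v i0| := by
    have h1 : |lam| * |v i0| = |(M.mulVec v) i0| := by
      rw [hMv]; simp [abs_mul]
    rw [h1]
    have h2 : |(M.mulVec v) i0| ≤ ∑ k, M i0 k * |v k| := by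
      simp only [Matrix.mulVec, dotProduct]
      refine le_trans (Finset.abs_sum_le_sum_abs _ _) ?_
      refine Finset.sum_le_sum fun k _ => ?_
      rw [abs_mul, abs_of_nonneg (hM i0 k)]
    refine le_trans h2 ?_
    calc ∑ k, M i0 k * |v k| ≤ ∑ k, M i0 k * (t * u k) :=
          Finset.sum_le_sum fun k _ => mul_le_mul_of_nonneg_left (htu k) (hM i0 k)
      _ = t * ∑ k, M i0 k * u k := by rw [Finset.mul_sum]; congr 1; ext k; ring
      _ ≤ t * (r * u i0) := by
          refine mul_le_mul_of_nonneg_left (hr i0) ?_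
          have := htui0; nlinarith [hu i0, hvi0]
      _ = r * (t * u i0) := by ring
      _ = r * |v i0| := by rw [htui0]
  have : |lam| ≤ r := le_of_mul_le_mul_right (by linarith [key]) hvi0
  exact le_trans (le_abs_self lam) this

/-- Row bound scalar form. -/
lemma row_final (n j : ℕ) (hn : 0 < n) (hj : j < n) :
    (1 / (1 - (1 - 1 / (4 * (n:ℝ))) / 2)) ^ ((j:ℝ) + 1/2) * Real.Gamma ((j:ℝ) + 1/2)
      ≤ (1 - 1 / (100 * (n:ℝ))) * Real.sqrt (2 * Real.pi) * ((2*j).factorial : ℝ)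
          * ((1 - 1 / (4 * (n:ℝ))) / 2) ^ j / (j.factorial : ℝ) := by
  have hN1 : (1:ℝ) ≤ (n:ℝ) := by exact_mod_cast hn
  set ε : ℝ := 1 / (4 * (n:ℝ)) with hε
  have hε0 : 0 < ε := by positivity
  have hε4 : ε ≤ 1 / 4 := by
    rw [hε, div_le_div_iff₀ (by positivity) (by norm_num)]; linarith
  set x : ℝ := (1 - ε) / 2 with hx
  have hx0 : 0 < x := by rw [hx]; linarith
  have h1x : 1 - x = (1 + ε) / 2 := by rw [hx]; ring
  have h1x0 : 0 < 1 - x := by rw [h1x]; linarith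
  have hG : 0 < Real.Gamma ((j:ℝ) + 1/2) := Real.Gamma_pos_of_pos (by positivity)
  have hF : (0:ℝ) < ((2*j).factorial : ℝ) := by positivity
  have hJ : (0:ℝ) < (j.factorial : ℝ) := by positivity
  have hr0 : (0:ℝ) < 1 - 1 / (100 * (n:ℝ)) := by
    have : 1 / (100 * (n:ℝ)) ≤ 1 / 100 := by
      rw [div_le_div_iff₀ (by positivity) (by norm_num)]; linarith
    linarith
  -- split the rpow
  have e1 : (1 / (1-x)) ^ ((j:ℝ) + 1/2) =
      ((1-x) ^ j)⁻¹ * (Real.sqrt (1-x))⁻¹ := by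
    rw [Real.rpow_add (by positivity), Real.rpow_natCast, Real.sqrt_eq_rpow,
      one_div, inv_pow, ← Real.inv_rpow h1x0.le]
  rw [e1]
  have e4 : Real.sqrt (1 + ε) = Real.sqrt 2 * Real.sqrt (1 - x) := by
    rw [← Real.sqrt_mul (by norm_num : (0:ℝ) ≤ 2) (1 - x), h1x]
    congr 1; ring
  have e3 : Real.sqrt (2 * Real.pi) = Real.sqrt 2 * Real.sqrt Real.pi :=
    Real.sqrt_mul (by norm_num) _
  have dup := dup_fact j
  have scal := scalar_ineq n j hn hj
  have epow : (1 - ε ^ 2) ^ j = 4 ^ j * x ^ j * (1 - x) ^ j := by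
    rw [← mul_pow, ← mul_pow, hx]; ring_nf
  rw [← hε] at scal
  have h4j : (0:ℝ) < 4 ^ j := by positivity
  have key2 : ((2*j).factorial:ℝ) * Real.sqrt Real.pi ≤
      (1 - 1 / (100 * (n:ℝ))) * (Real.sqrt 2 * Real.sqrt Real.pi) * ((2*j).factorial:ℝ)
        * x ^ j * ((1-x) ^ j * Real.sqrt (1-x)) * 4 ^ j := by
    calc ((2*j).factorial:ℝ) * Real.sqrt Real.pi
        = (((2*j).factorial:ℝ) * Real.sqrt Real.pi) * 1 := by ring
      _ ≤ (((2*j).factorial:ℝ) * Real.sqrt Real.pi) *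
            ((1 - 1 / (100 * (n:ℝ))) * Real.sqrt (1 + ε) * (1 - ε ^ 2) ^ j) := by
          refine mul_le_mul_of_nonneg_left scal (by positivity)
      _ = _ := by rw [e4, epow]; ring
  have lhs_eq : ((1-x) ^ j)⁻¹ * (Real.sqrt (1-x))⁻¹ * Real.Gamma ((j:ℝ) + 1/2)
      = Real.Gamma ((j:ℝ) + 1/2) / ((1-x) ^ j * Real.sqrt (1-x)) := by
    rw [eq_div_iff (by positivity : ((1-x) ^ j * Real.sqrt (1-x)) ≠ 0)]
    field_simp
  rw [lhs_eq, div_le_div_iff₀ (by positivity) hJ]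
  have hGj : Real.Gamma ((j:ℝ) + 1/2) * (j.factorial:ℝ)
      = ((2*j).factorial:ℝ) * Real.sqrt Real.pi / 4 ^ j := (eq_div_iff h4j.ne').2 dup
  rw [hGj, div_le_iff₀ h4j, e3]
  nlinarith [key2]

lemma ginibreM_apply (n : ℕ) (j k : Fin n) :
    ginibreM n j k = (1 / Real.sqrt (2 * Real.pi)) *
      Real.Gamma (((j : ℕ) : ℝ) + ((k : ℕ) : ℝ) + 1 / 2) /
        (Real.sqrt ((2 * (j : ℕ)).factorial) * Real.sqrt ((2 * (k : ℕ)).factorial)) := by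
  show (1 / Real.sqrt (2 * Real.pi)) *
      Real.Gamma (((j : ℕ) + 1 : ℝ) + ((k : ℕ) + 1 : ℝ) - 3 / 2) /
        Real.sqrt (Real.Gamma (2 * ((j : ℕ) + 1 : ℝ) - 1) *
          Real.Gamma (2 * ((k : ℕ) + 1 : ℝ) - 1)) = _
  have e1 : (((j : ℕ) + 1 : ℝ)) + ((k : ℕ) + 1 : ℝ) - 3 / 2
      = ((j : ℕ) : ℝ) + ((k : ℕ) : ℝ) + 1 / 2 := by ring
  have e2 : ∀ m : ℕ, (2 : ℝ) * ((m : ℝ) + 1) - 1 = ((2 * m : ℕ) : ℝ) + 1 := by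
    intro m; push_cast; ring
  rw [e1, e2 (j : ℕ), e2 (k : ℕ), Real.Gamma_nat_eq_factorial,
    Real.Gamma_nat_eq_factorial,
    Real.sqrt_mul (show (0:ℝ) ≤ ((2 * (j : ℕ)).factorial : ℝ) by positivity)]

lemma row_matrix (n : ℕ) (hn : 0 < n) (j : Fin n) :
    ∑ k : Fin n, ginibreM n j k *
        (Real.sqrt ((2 * (k : ℕ)).factorial) * ((1 - 1 / (4 * (n:ℝ))) / 2) ^ (k : ℕ)
          / ((k : ℕ).factorial : ℝ)) ≤
      (1 - 1 / (100 * (n:ℝ))) *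
        (Real.sqrt ((2 * (j : ℕ)).factorial) * ((1 - 1 / (4 * (n:ℝ))) / 2) ^ (j : ℕ)
          / ((j : ℕ).factorial : ℝ)) := by
  have hN1 : (1:ℝ) ≤ (n:ℝ) := by exact_mod_cast hn
  set x : ℝ := (1 - 1 / (4 * (n:ℝ))) / 2 with hxdef
  have hε0 : (0:ℝ) < 1 / (4 * (n:ℝ)) := by positivity
  have hε4 : 1 / (4 * (n:ℝ)) ≤ 1 / 4 := by
    rw [div_le_div_iff₀ (by positivity) (by norm_num)]; linarith
  have hx0 : 0 < x := by rw [hxdef]; linarith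
  have hx1 : x < 1 := by rw [hxdef]; linarith
  have h2π : (0:ℝ) < Real.sqrt (2 * Real.pi) := Real.sqrt_pos.2 (by positivity)
  have hFj : (0:ℝ) < Real.sqrt ((2 * (j : ℕ)).factorial) :=
    Real.sqrt_pos.2 (by positivity)
  have hterm : ∀ k : Fin n, ginibreM n j k *
      (Real.sqrt ((2 * (k : ℕ)).factorial) * x ^ (k : ℕ) / ((k : ℕ).factorial : ℝ))
      = (1 / (Real.sqrt (2 * Real.pi) * Real.sqrt ((2 * (j : ℕ)).factorial))) *
        (Real.Gamma ((((j : ℕ) : ℝ) + 1 / 2) + ((k : ℕ) : ℝ)) * x ^ (k : ℕ)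
          / ((k : ℕ).factorial : ℝ)) := by
    intro k
    have hFk : (0:ℝ) < Real.sqrt ((2 * (k : ℕ)).factorial) :=
      Real.sqrt_pos.2 (by positivity)
    have hKf : (0:ℝ) < ((k : ℕ).factorial : ℝ) := by positivity
    rw [ginibreM_apply]
    rw [show (((j : ℕ) : ℝ) + 1 / 2) + ((k : ℕ) : ℝ)
        = ((j : ℕ) : ℝ) + ((k : ℕ) : ℝ) + 1 / 2 by ring]
    field_simp
  rw [Finset.sum_congr rfl (fun k _ => hterm k), ← Finset.mul_sum]
  have hsum : ∑ k : Fin n, Real.Gamma ((((j : ℕ) : ℝ) + 1 / 2) + ((k : ℕ) : ℝ))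
      * x ^ (k : ℕ) / ((k : ℕ).factorial : ℝ)
      = ∑ m ∈ Finset.range n, Real.Gamma ((((j : ℕ) : ℝ) + 1 / 2) + (m : ℝ))
        * x ^ m / (m.factorial : ℝ) := by
    exact Fin.sum_univ_eq_sum_range
      (fun m => Real.Gamma ((((j : ℕ) : ℝ) + 1 / 2) + (m : ℝ)) * x ^ m / (m.factorial : ℝ)) n
  rw [hsum]
  have hseries := gammaSeries_le (((j : ℕ) : ℝ) + 1 / 2) x (by positivity) hx0 hx1 n
  have hrow := row_final n (j : ℕ) hn j.isLt
  calc (1 / (Real.sqrt (2 * Real.pi) * Real.sqrt ((2 * (j : ℕ)).factorial))) *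
        ∑ m ∈ Finset.range n, Real.Gamma ((((j : ℕ) : ℝ) + 1 / 2) + (m : ℝ))
          * x ^ m / (m.factorial : ℝ)
      ≤ (1 / (Real.sqrt (2 * Real.pi) * Real.sqrt ((2 * (j : ℕ)).factorial))) *
          ((1 / (1 - x)) ^ ((((j : ℕ) : ℝ)) + 1/2) * Real.Gamma (((j : ℕ) : ℝ) + 1/2)) := by
        exact mul_le_mul_of_nonneg_left hseries (by positivity)
    _ ≤ (1 / (Real.sqrt (2 * Real.pi) * Real.sqrt ((2 * (j : ℕ)).factorial))) *
          ((1 - 1 / (100 * (n:ℝ))) * Real.sqrt (2 * Real.pi)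
            * ((2 * (j : ℕ)).factorial : ℝ) * x ^ (j : ℕ) / (((j : ℕ)).factorial : ℝ)) := by
        exact mul_le_mul_of_nonneg_left hrow (by positivity)
    _ = (1 - 1 / (100 * (n:ℝ))) *
          (Real.sqrt ((2 * (j : ℕ)).factorial) * x ^ (j : ℕ) / (((j : ℕ)).factorial : ℝ)) := by
        have hsq : Real.sqrt ((2 * (j : ℕ)).factorial) * Real.sqrt ((2 * (j : ℕ)).factorial)
            = ((2 * (j : ℕ)).factorial : ℝ) := Real.mul_self_sqrt (by positivity)
        set SF : ℝ := Real.sqrt ((2 * (j : ℕ)).factorial) with hSF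
        rw [← hsq]
        have hJf : (0:ℝ) < (((j : ℕ)).factorial : ℝ) := by positivity
        field_simp

theorem stmt4 :
    ∃ μ : ℝ, 0 < μ ∧ ∃ N : ℕ, ∀ n : ℕ, N < n →
      ∀ lam ∈ spectrum ℝ (ginibreM n), lam ≤ 1 - μ / n := by
  refine ⟨1 / 100, by norm_num, 0, fun n hn lam hlam => ?_⟩
  have hn' : 0 < n := hn
  have hμ : (1:ℝ) / 100 / (n:ℝ) = 1 / (100 * (n:ℝ)) := by
    rw [div_div]
  rw [hμ]
  refine eig_le_of_weights (ginibreM n) ?_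
    (fun k => Real.sqrt ((2 * (k : ℕ)).factorial) * ((1 - 1 / (4 * (n:ℝ))) / 2) ^ (k : ℕ)
      / ((k : ℕ).factorial : ℝ)) ?_ _ (fun i => row_matrix n hn' i) lam hlam
  · intro i k
    rw [ginibreM_apply]
    have := Real.Gamma_pos_of_pos (show (0:ℝ) < ((i : ℕ) : ℝ) + ((k : ℕ) : ℝ) + 1 / 2 by positivity)
    positivity
  · intro i
    have hN1 : (1:ℝ) ≤ (n:ℝ) := by exact_mod_cast hn'
    have hε4 : 1 / (4 * (n:ℝ)) ≤ 1 / 4 := by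
      rw [div_le_div_iff₀ (by positivity) (by norm_num)]; linarith
    have : (0:ℝ) < (1 - 1 / (4 * (n:ℝ))) / 2 := by linarith
    have h1 : (0:ℝ) < Real.sqrt ((2 * (i : ℕ)).factorial) := Real.sqrt_pos.2 (by positivity)
    positivity
end

section
/- There exist two sequences of real numbers $(h_n)_{n\ge 1}$ and $(S_n)_{n \ge 1}$ with $\lim_{n\to\infty} h_n = 1/2$ and $\lim_{n\to\infty} S_n = 2$, such that for every $y \ge 0$ and every integer $n \ge 1$, $e^{-ny}\,\cosh_{n-1}(ny) \ge h_n\, \mathbb{1}(y < S_n)$, where $\mathbb{1}(y < S_n)$ equals $1$ if $y < S_n$ and $0$ otherwise. -/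
/-- `cosh_n(x) = ∑_{k=0}^{n} x^(2k)/(2k)!`, the degree-`2n` Taylor polynomial of `cosh`. -/
noncomputable def coshPoly (n : ℕ) (x : ℝ) : ℝ :=
  ∑ k ∈ Finset.range (n + 1), x ^ (2 * k) / (Nat.factorial (2 * k) : ℝ)

/-!
Put `x = n y`. The Taylor tail `cosh x - cosh_{n-1}(x) = ∑_{k ≥ n} x^{2k}/(2k)!` is bounded,
Chernoff-style, by `l^{-2n} e^{l x}` for every `l ≥ 1`, and `cosh x ≥ e^x / 2`; hence
`e^{-x} cosh_{n-1}(x) ≥ 1/2 - l^{-2n} e^{(l-1) x}`. With `l = 1 + ε`, `log (1 + ε) ≥ ε - ε²`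
and `y ≤ 2 - 3ε`, the error term is at most `e^{-n ε²}`; the choice `ε = n^{-1/4}` makes it
`e^{-√n} → 0` while `S_n = 2 - 3ε → 2`.
-/

open Real Filter Topology Nat

lemma coshPoly_nonneg (N : ℕ) (x : ℝ) : 0 ≤ coshPoly N x :=
  Finset.sum_nonneg fun k _ => by rw [pow_mul]; positivity

lemma cosh_sub_coshPoly (N : ℕ) (x : ℝ) :
    cosh x - coshPoly N x = ∑' k, x ^ (2 * (k + (N + 1))) / (2 * (k + (N + 1)))! := by
  rw [← (hasSum_cosh x).tsum_eq, ← (hasSum_cosh x).summable.sum_add_tsum_nat_add (N + 1),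
    coshPoly, add_sub_cancel_left]

lemma pow_le_inv_pow_mul_mul_pow {x l : ℝ} (hx : 0 ≤ x) (hl : 1 ≤ l) {m i : ℕ} (hmi : m ≤ i) :
    x ^ i ≤ l⁻¹ ^ m * (l * x) ^ i := by
  have hl₀ : l ≠ 0 := by positivity
  rw [mul_pow, ← mul_assoc, inv_pow, mul_comm _ (l ^ i), ← pow_sub₀ l hl₀ hmi]
  exact le_mul_of_one_le_left (by positivity) (one_le_pow₀ hl)

lemma cosh_sub_coshPoly_le (N : ℕ) {x l : ℝ} (hx : 0 ≤ x) (hl : 1 ≤ l) :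
    cosh x - coshPoly N x ≤ l⁻¹ ^ (2 * N + 2) * exp (l * x) := by
  have hinj : Function.Injective fun k => 2 * (k + (N + 1)) := fun a b h => by simp at h; omega
  rw [cosh_sub_coshPoly, exp_eq_exp_ℝ, NormedSpace.exp_eq_tsum_div]
  calc ∑' k, x ^ (2 * (k + (N + 1))) / (2 * (k + (N + 1)))!
      ≤ ∑' k, l⁻¹ ^ (2 * N + 2) * ((l * x) ^ (2 * (k + (N + 1))) / (2 * (k + (N + 1)))!) := by
        refine Summable.tsum_le_tsum (fun k => ?_)
          ((summable_nat_add_iff (N + 1)).2 (hasSum_cosh x).summable)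
          (((summable_nat_add_iff (N + 1)).2 (hasSum_cosh (l * x)).summable).mul_left _)
        rw [mul_div_assoc']
        gcongr
        exact pow_le_inv_pow_mul_mul_pow hx hl (by omega)
    _ = l⁻¹ ^ (2 * N + 2) * ∑' k, (l * x) ^ (2 * (k + (N + 1))) / (2 * (k + (N + 1)))! :=
        tsum_mul_left
    _ ≤ l⁻¹ ^ (2 * N + 2) * ∑' j, (l * x) ^ j / j ! :=
        mul_le_mul_of_nonneg_left (tsum_comp_le_tsum_of_inj (summable_pow_div_factorial _)
          (fun j => by positivity) hinj) (by positivity)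

lemma half_sub_le_exp_neg_mul_coshPoly (N : ℕ) {x l : ℝ} (hx : 0 ≤ x) (hl : 1 ≤ l) :
    1 / 2 - l⁻¹ ^ (2 * N + 2) * exp ((l - 1) * x) ≤ exp (-x) * coshPoly N x := by
  have htail := mul_le_mul_of_nonneg_left (cosh_sub_coshPoly_le N hx hl) (exp_pos (-x)).le
  have hcosh : exp x / 2 ≤ cosh x := by rw [cosh_eq]; linarith [exp_pos (-x)]
  have hhalf := mul_le_mul_of_nonneg_left hcosh (exp_pos (-x)).le
  have hexp : exp (-x) * exp x = 1 := by rw [← exp_add, neg_add_cancel, exp_zero]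
  have hexp_l : exp (-x) * exp (l * x) = exp ((l - 1) * x) := by rw [← exp_add]; ring_nf
  linear_combination hhalf + htail - hexp / 2 + l⁻¹ ^ (2 * N + 2) * hexp_l

lemma inv_one_add_le_exp {ε : ℝ} (hε : 0 ≤ ε) : (1 + ε)⁻¹ ≤ exp (-(ε - ε ^ 2)) := by
  rw [exp_neg]
  refine inv_anti₀ (exp_pos _) ((le_log_iff_exp_le (by positivity)).1 ?_)
  have hlog := one_sub_inv_le_log_of_pos (by positivity : 0 < 1 + ε)
  have : ε - ε ^ 2 ≤ 1 - (1 + ε)⁻¹ := by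
    rw [show 1 - (1 + ε)⁻¹ = ε / (1 + ε) by field_simp; ring, le_div_iff₀ (by positivity)]
    nlinarith [pow_nonneg hε 3]
  linarith

lemma half_sub_exp_le_exp_neg_mul_coshPoly {n : ℕ} (hn : 1 ≤ n) {ε y : ℝ} (hε : 0 ≤ ε)
    (hy₀ : 0 ≤ y) (hy : y ≤ 2 - 3 * ε) :
    1 / 2 - exp (-(n * ε ^ 2)) ≤ exp (-(n * y)) * coshPoly (n - 1) (n * y) := by
  obtain ⟨N, rfl⟩ : ∃ N, n = N + 1 := ⟨n - 1, by omega⟩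
  have hbound := half_sub_le_exp_neg_mul_coshPoly N (x := ((N + 1 : ℕ) : ℝ) * y)
    (by positivity) (by linarith : 1 ≤ 1 + ε)
  rw [add_sub_cancel_left] at hbound
  rw [add_tsub_cancel_right]
  refine le_trans (sub_le_sub_left ?_ _) hbound
  calc (1 + ε)⁻¹ ^ (2 * N + 2) * exp (ε * (((N + 1 : ℕ) : ℝ) * y))
      ≤ exp (-(ε - ε ^ 2)) ^ (2 * N + 2) * exp (ε * (((N + 1 : ℕ) : ℝ) * y)) := by
        gcongr
        exact inv_one_add_le_exp hε
    _ = exp ((2 * N + 2 : ℕ) * -(ε - ε ^ 2) + ε * (((N + 1 : ℕ) : ℝ) * y)) := by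
        rw [exp_add, exp_nat_mul]
    _ ≤ exp (-(((N + 1 : ℕ) : ℝ) * ε ^ 2)) := by
        gcongr
        push_cast
        nlinarith [mul_le_mul_of_nonneg_left hy (by positivity : 0 ≤ ε * (N + 1))]

lemma natCast_mul_inv_sqrt_sqrt_sq (n : ℕ) : (n : ℝ) * (√(√n))⁻¹ ^ 2 = √n := by
  rw [inv_pow, sq_sqrt (sqrt_nonneg _), ← div_eq_mul_inv, div_sqrt]

lemma tendsto_sqrt_natCast_atTop : Tendsto (fun n : ℕ => √(n : ℝ)) atTop atTop :=
  tendsto_sqrt_atTop.comp tendsto_natCast_atTop_atTop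

theorem stmt7 :
    ∃ h S : ℕ → ℝ,
      Filter.Tendsto h Filter.atTop (nhds (1 / 2)) ∧
      Filter.Tendsto S Filter.atTop (nhds 2) ∧
      ∀ n : ℕ, 1 ≤ n → ∀ y : ℝ, 0 ≤ y →
        Real.exp (-(n * y)) * coshPoly (n - 1) (n * y) ≥
          h n * (if y < S n then (1 : ℝ) else 0) := by
  refine ⟨fun n => 1 / 2 - exp (-√n), fun n => 2 - 3 * (√(√n))⁻¹, ?_, ?_, ?_⟩
  · simpa using tendsto_const_nhds.sub
      (tendsto_exp_atBot.comp (tendsto_neg_atTop_atBot.comp tendsto_sqrt_natCast_atTop))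
  · simpa using tendsto_const_nhds.sub
      ((tendsto_inv_atTop_zero.comp
        (tendsto_sqrt_atTop.comp tendsto_sqrt_natCast_atTop)).const_mul 3)
  · intro n hn y hy₀
    beta_reduce
    split_ifs with hy
    · rw [mul_one, ← natCast_mul_inv_sqrt_sqrt_sq]
      exact half_sub_exp_le_exp_neg_mul_coshPoly hn (by positivity) hy₀ hy.le
    · rw [mul_zero]
      exact mul_nonneg (exp_pos _).le (coshPoly_nonneg _ _)
end

section
/- Let $(\alpha_n)_{n\ge 1}$ be a sequence of positive real numbers with $\lim_{n\to\infty}\alpha_n = \infty$ and $\lim_{n\to\infty} \alpha_n n^{-1/2} = 0$. Then there exists $N_0 > 0$ such that for all integers $n > N_0$ and all $x \ge 0$, $e^{-nx}\,\cosh_n(nx) \ge \left(\frac{1}{2} - \frac{1}{\sqrt{4\pi}}\,\alpha_n^{-1} e^{-\alpha_n^2/4}\right)\,\mathbb{1}\big(x \le 2 - \alpha_n n^{-1/2}\big)$, where $\mathbb{1}(x\le s)$ equals $1$ if $x\le s$ and $0$ otherwise. -/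
open Real Nat Finset

lemma one_sub_le_exp_neg_cubic {t : ℝ} (ht : 0 ≤ t) :
    1 - t ≤ exp (-(t + t ^ 2 / 2 + t ^ 3 / 3)) := by
  rcases le_or_gt 1 t with h1 | h1
  · exact (sub_nonpos.2 h1).trans (exp_pos _).le
  have hlog := hasSum_pow_div_log_of_abs_lt_one (abs_lt.2 ⟨by linarith, h1⟩)
  have hpartial := sum_le_hasSum (range 3) (fun i _ ↦ by positivity) hlog
  norm_num [sum_range_succ] at hpartial
  calc 1 - t = exp (log (1 - t)) := (exp_log (by linarith)).symm
    _ ≤ _ := exp_le_exp.2 (by linarith)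

lemma monotoneOn_pow_mul_exp_neg (j : ℕ) :
    MonotoneOn (fun y : ℝ ↦ y ^ j * exp (-y)) (Set.Icc 0 j) := by
  rintro y ⟨hy, -⟩ Y ⟨-, hYj⟩ hyY
  rcases (hy.trans hyY).eq_or_lt with hY | hY
  · obtain rfl : y = Y := le_antisymm hyY (hY ▸ hy)
    rfl
  -- `u ≤ exp (u - 1)` at `u = y / Y`, raised to the power `j ≥ Y`.
  have hratio : (y / Y) ^ j ≤ exp (y - Y) :=
    calc (y / Y) ^ j ≤ exp (y / Y - 1) ^ j := by
          gcongr
          linarith [add_one_le_exp (y / Y - 1)]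
      _ = exp (j * (y / Y - 1)) := by rw [← exp_nat_mul]
      _ ≤ exp (Y * (y / Y - 1)) :=
          exp_le_exp.2 <| mul_le_mul_of_nonpos_right hYj <| by
            rw [sub_nonpos, div_le_one hY]; exact hyY
      _ = exp (y - Y) := by field_simp
  calc y ^ j * exp (-y) = Y ^ j * (y / Y) ^ j * exp (-y) := by
        rw [← mul_pow, mul_div_cancel₀ _ hY.ne']
    _ ≤ Y ^ j * exp (y - Y) * exp (-y) := by gcongr
    _ = Y ^ j * exp (-Y) := by rw [mul_assoc, ← exp_add]; ring_nf

lemma pow_div_factorial_add_two_mul_le {Y : ℝ} (hY : 0 ≤ Y) (k i : ℕ) :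
    Y ^ (k + 2 * i) / (k + 2 * i)! ≤ Y ^ k / k ! * (Y ^ 2 / ((k + 1) * (k + 2))) ^ i := by
  induction i with
  | zero => simp
  | succ i ih =>
    set j := k + 2 * i
    have hstep : Y ^ (j + 2) / (j + 2)! = Y ^ j / j ! * (Y ^ 2 / ((j + 1) * (j + 2))) := by
      rw [factorial_succ, factorial_succ, pow_add]
      push_cast
      field_simp
      ring
    have hkj : (k : ℝ) ≤ j := by exact_mod_cast Nat.le_add_right k (2 * i)
    rw [show k + 2 * (i + 1) = j + 2 by ring, hstep, pow_succ (Y ^ 2 / _) i, ← mul_assoc]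
    gcongr

lemma exp_neg_mul_tsum_pow_add_two_mul_div_factorial_le {y Y : ℝ} {k : ℕ} (hy : 0 ≤ y)
    (hyY : y ≤ Y) (hYk : Y ≤ k) :
    exp (-y) * ∑' i, y ^ (k + 2 * i) / (k + 2 * i)! ≤
      Y ^ k * exp (-Y) / k ! / (1 - Y ^ 2 / ((k + 1) * (k + 2))) := by
  set r : ℝ := Y ^ 2 / ((k + 1) * (k + 2))
  have hr0 : 0 ≤ r := by positivity
  have hr1 : r < 1 := by rw [div_lt_one (by positivity)]; nlinarith
  have hterm (i : ℕ) :
      exp (-y) * (y ^ (k + 2 * i) / (k + 2 * i)!) ≤ Y ^ k * exp (-Y) / k ! * r ^ i := by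
    have hYi : Y ≤ (k + 2 * i : ℕ) := hYk.trans (by exact_mod_cast Nat.le_add_right k (2 * i))
    calc exp (-y) * (y ^ (k + 2 * i) / (k + 2 * i)!)
        = y ^ (k + 2 * i) * exp (-y) / (k + 2 * i)! := by ring
      _ ≤ Y ^ (k + 2 * i) * exp (-Y) / (k + 2 * i)! := by
          gcongr ?_ / _
          exact monotoneOn_pow_mul_exp_neg _ ⟨hy, hyY.trans hYi⟩ ⟨hy.trans hyY, hYi⟩ hyY
      _ = exp (-Y) * (Y ^ (k + 2 * i) / (k + 2 * i)!) := by ring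
      _ ≤ exp (-Y) * (Y ^ k / k ! * r ^ i) := by
          gcongr
          exact pow_div_factorial_add_two_mul_le (hy.trans hyY) k i
      _ = Y ^ k * exp (-Y) / k ! * r ^ i := by ring
  have hsummable : Summable (fun i : ℕ ↦ y ^ (k + 2 * i) / (k + 2 * i)!) :=
    (Real.summable_pow_div_factorial y).comp_injective (fun a b h ↦ by simp at h; omega)
  calc exp (-y) * ∑' i, y ^ (k + 2 * i) / (k + 2 * i)!
      = ∑' i, exp (-y) * (y ^ (k + 2 * i) / (k + 2 * i)!) := tsum_mul_left.symm
    _ ≤ ∑' i, Y ^ k * exp (-Y) / k ! * r ^ i :=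
        Summable.tsum_le_tsum hterm (hsummable.mul_left _)
          ((summable_geometric_of_lt_one hr0 hr1).mul_left _)
    _ = Y ^ k * exp (-Y) / k ! / (1 - r) := by
        rw [tsum_mul_left, tsum_geometric_of_lt_one hr0 hr1, div_eq_mul_inv _ (1 - r)]

lemma pow_mul_exp_neg_div_factorial_le {m : ℕ} (hm : m ≠ 0) {Y : ℝ} (hY : 0 ≤ Y)
    (hYm : Y ≤ m) :
    Y ^ m * exp (-Y) / m ! ≤
      exp (-((m - Y) ^ 2 / (2 * m) + (m - Y) ^ 3 / (3 * m ^ 2))) / √(2 * π * m) := by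
  have hm0 : (0 : ℝ) < m := by positivity
  set d : ℝ := m - Y
  have hdm : d / m ≤ 1 := div_le_one_of_le₀ (by linarith) hm0.le
  have hcubic : (Y / m) ^ m * exp d ≤ exp (-(d ^ 2 / (2 * m) + d ^ 3 / (3 * m ^ 2))) :=
    calc (Y / m) ^ m * exp d
        ≤ exp (-(d / m + (d / m) ^ 2 / 2 + (d / m) ^ 3 / 3)) ^ m * exp d := by
          rw [show Y / m = 1 - d / m by field_simp; ring]
          gcongr ?_ ^ m * _
          exact one_sub_le_exp_neg_cubic (by positivity)
      _ = exp (-(d ^ 2 / (2 * m) + d ^ 3 / (3 * m ^ 2))) := by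
          rw [← exp_nat_mul, ← exp_add]
          congr 1
          field_simp
          ring
  calc Y ^ m * exp (-Y) / m ! ≤ Y ^ m * exp (-Y) / (√(2 * π * m) * (m / exp 1) ^ m) := by
        gcongr
        exact Stirling.le_factorial_stirling m
    _ = (Y / m) ^ m * exp d / √(2 * π * m) := by
        rw [div_pow, div_pow, exp_one_pow, show d = m + -Y by ring, exp_add]
        field_simp
    _ ≤ _ := by gcongr

lemma gaussian_exponent_le {N A : ℝ} (hN : 11 ≤ N) (hA : 4 ≤ A) :
    A ^ 2 / (4 * N) + A / (N + 1) ≤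
      (A + 2) ^ 2 / (2 * (2 * N + 2)) + (A + 2) ^ 3 / (3 * (2 * N + 2) ^ 2) := by
  have hN0 : 0 < N := by linarith
  have hcubic : 3 * A ^ 2 * (N + 1) ≤ N * (A + 2) ^ 3 := by
    nlinarith [mul_nonneg (mul_nonneg (sub_nonneg.2 hA) (sq_nonneg A)) hN0.le,
      mul_nonneg (sq_nonneg A) (by linarith : (0 : ℝ) ≤ 7 * N - 3),
      mul_nonneg (by linarith : (0 : ℝ) ≤ A) hN0.le]
  have hkey : 3 * A ^ 2 * (N + 1) ^ 2 + 12 * A * N * (N + 1) ≤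
      3 * N * (N + 1) * (A + 2) ^ 2 + N * (A + 2) ^ 3 := by
    nlinarith
  rw [div_add_div _ _ (by positivity) (by positivity),
    div_add_div _ _ (by positivity) (by positivity),
    div_le_div_iff₀ (by positivity) (by positivity)]
  nlinarith [mul_le_mul_of_nonneg_right hkey (by positivity : (0 : ℝ) ≤ 16 * (N + 1) ^ 2)]

lemma tail_constant_poly_le {N A : ℝ} (hN : 11 ≤ N) (hA : 4 ≤ A) (hAN : 2 * A ≤ N) :
    A * (N + 1) * ((2 * N + 3) * (2 * N + 4)) ≤
      N * ((N + 1 + A) * ((A + 2) * (4 * N + 2 - A))) := by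
  have hA0 : 0 ≤ A := by linarith
  have hN0 : 0 ≤ N := by linarith
  nlinarith [mul_nonneg (mul_nonneg (mul_nonneg hN0 hN0) hA0) (sub_nonneg.2 hA),
    mul_nonneg (mul_nonneg hN0 (mul_nonneg hA0 hA0)) (sub_nonneg.2 hAN),
    mul_nonneg (mul_nonneg (mul_nonneg hA0 hA0) (sub_nonneg.2 hN)) hN0,
    mul_nonneg (mul_nonneg hN0 hA0) (sub_nonneg.2 hA), mul_nonneg hA0 (sub_nonneg.2 hA),
    mul_nonneg (sub_nonneg.2 hN) (sub_nonneg.2 hA)]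

lemma div_one_sub_le_gaussian_of_le {N A C : ℝ} (hN : 11 ≤ N) (hA : 4 ≤ A)
    (hAN : 2 * A ≤ N)
    (hC : C ≤ exp (-((A + 2) ^ 2 / (2 * (2 * N + 2)) + (A + 2) ^ 3 / (3 * (2 * N + 2) ^ 2))) /
      √(2 * π * (2 * N + 2))) :
    C / (1 - (2 * N - A) ^ 2 / ((2 * N + 3) * (2 * N + 4))) ≤
      √N / (√(4 * π) * A) * exp (-(A ^ 2 / (4 * N))) := by
  have hN0 : 0 < N := by linarith
  set Q : ℝ := (2 * N + 3) * (2 * N + 4)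
  have hQ : 0 < Q := by positivity
  have hgap_pos : 0 < (A + 2) * (4 * N + 2 - A) := by nlinarith
  have hgap : (A + 2) * (4 * N + 2 - A) ≤ Q - (2 * N - A) ^ 2 := by nlinarith
  have hr : 0 < 1 - (2 * N - A) ^ 2 / Q := by
    rw [sub_pos, div_lt_one hQ]; linarith
  have hinv : 1 / (1 - (2 * N - A) ^ 2 / Q) ≤ Q / ((A + 2) * (4 * N + 2 - A)) := by
    rw [one_sub_div hQ.ne', one_div_div]
    gcongr
  -- `exp (-x) ≤ 1 / (1 + x)` absorbs the term `A / (N + 1)` of the exponent.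
  have hexp : exp (-((A + 2) ^ 2 / (2 * (2 * N + 2)) + (A + 2) ^ 3 / (3 * (2 * N + 2) ^ 2))) ≤
      exp (-(A ^ 2 / (4 * N))) * ((N + 1) / (N + 1 + A)) :=
    calc _ ≤ exp (-(A ^ 2 / (4 * N)) + -(A / (N + 1))) :=
          exp_le_exp.2 (by linarith [gaussian_exponent_le hN hA])
      _ ≤ exp (-(A ^ 2 / (4 * N))) * ((N + 1) / (N + 1 + A)) := by
          rw [exp_add, exp_neg (A / _), ← one_div]
          gcongr _ * ?_
          rw [div_le_div_iff₀ (by positivity) (by positivity)]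
          nlinarith [add_one_le_exp (A / (N + 1)),
            mul_div_cancel₀ A (by positivity : N + 1 ≠ 0)]
  have hsqrt : √(4 * π) * √N ≤ √(2 * π * (2 * N + 2)) := by
    rw [← sqrt_mul (by positivity)]
    exact sqrt_le_sqrt (by nlinarith [pi_pos])
  have hsN : √N * √N = N := mul_self_sqrt hN0.le
  have hpoly := tail_constant_poly_le hN hA hAN
  calc C / (1 - (2 * N - A) ^ 2 / Q)
      ≤ exp (-((A + 2) ^ 2 / (2 * (2 * N + 2)) + (A + 2) ^ 3 / (3 * (2 * N + 2) ^ 2))) /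
          √(2 * π * (2 * N + 2)) * (1 / (1 - (2 * N - A) ^ 2 / Q)) := by
        rw [mul_one_div]; gcongr
    _ ≤ exp (-(A ^ 2 / (4 * N))) * ((N + 1) / (N + 1 + A)) / (√(4 * π) * √N) *
          (Q / ((A + 2) * (4 * N + 2 - A))) := by
        gcongr
    _ = exp (-(A ^ 2 / (4 * N))) / √(4 * π) *
          ((N + 1) * Q / ((N + 1 + A) * ((A + 2) * (4 * N + 2 - A)) * √N)) := by
        field_simp
    _ ≤ exp (-(A ^ 2 / (4 * N))) / √(4 * π) * (√N / A) := by
        gcongr _ * ?_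
        rw [div_le_div_iff₀ (by positivity) (by positivity)]
        calc (N + 1) * Q * A ≤ N * ((N + 1 + A) * ((A + 2) * (4 * N + 2 - A))) := by linarith
          _ = _ := by linear_combination (-((N + 1 + A) * ((A + 2) * (4 * N + 2 - A)))) * hsN
    _ = √N / (√(4 * π) * A) * exp (-(A ^ 2 / (4 * N))) := by ring

lemma exp_neg_mul_tsum_tail_le {n : ℕ} (hn : 11 ≤ n) {a y : ℝ} (ha : 4 ≤ a)
    (han : 2 * a ≤ √n) (hy : 0 ≤ y) (hyn : y ≤ 2 * n - a * √n) :
    exp (-y) * ∑' i, y ^ (2 * (n + 1) + 2 * i) / (2 * (n + 1) + 2 * i)! ≤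
      1 / √(4 * π) * a⁻¹ * exp (-a ^ 2 / 4) := by
  have hN : (11 : ℝ) ≤ n := by exact_mod_cast hn
  have hsn : √n * √n = n := mul_self_sqrt (Nat.cast_nonneg n)
  have hs1 : 1 ≤ √(n : ℝ) := one_le_sqrt.2 (by linarith)
  set A := a * √n
  have hA : 4 ≤ A := by nlinarith
  have hAN : 2 * A ≤ n := by nlinarith
  have hYm : 2 * n - A ≤ ((2 * (n + 1) : ℕ) : ℝ) := by push_cast; linarith
  have htail := exp_neg_mul_tsum_pow_add_two_mul_div_factorial_le hy hyn hYm
  have hC := pow_mul_exp_neg_div_factorial_le (by positivity) (by linarith) hYm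
  push_cast at htail hC
  have hbound := div_one_sub_le_gaussian_of_le hN hA hAN (by convert hC using 4 <;> ring)
  calc _ ≤ _ := htail
    _ ≤ √n / (√(4 * π) * A) * exp (-(A ^ 2 / (4 * n))) := by convert hbound using 3; ring
    _ = _ := by
        have hA2 : A ^ 2 = a ^ 2 * n := by rw [mul_pow, sq_sqrt (Nat.cast_nonneg _)]
        rw [hA2, show a ^ 2 * n / (4 * n) = a ^ 2 / 4 by field_simp, neg_div]
        field_simp
        exact mul_comm _ _

lemma coshPoly_eq_cosh_sub_tsum (n : ℕ) (y : ℝ) :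
    coshPoly n y = cosh y - ∑' i, y ^ (2 * (n + 1) + 2 * i) / (2 * (n + 1) + 2 * i)! := by
  rw [← (hasSum_cosh y).tsum_eq, ← (hasSum_cosh y).summable.sum_add_tsum_nat_add (n + 1),
    coshPoly]
  simp_rw [show ∀ i, 2 * (i + (n + 1)) = 2 * (n + 1) + 2 * i from fun i ↦ by ring]
  ring

lemma half_le_exp_neg_mul_cosh (y : ℝ) : 1 / 2 ≤ exp (-y) * cosh y := by
  rw [cosh_eq, exp_neg]
  have := exp_pos y
  field_simp
  nlinarith

lemma sub_le_exp_neg_mul_coshPoly {n : ℕ} (hn : 11 ≤ n) {a y : ℝ} (ha : 4 ≤ a)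
    (han : 2 * a ≤ √n) (hy : 0 ≤ y) (hyn : y ≤ 2 * n - a * √n) :
    1 / 2 - 1 / √(4 * π) * a⁻¹ * exp (-a ^ 2 / 4) ≤ exp (-y) * coshPoly n y := by
  rw [coshPoly_eq_cosh_sub_tsum, mul_sub]
  linarith [half_le_exp_neg_mul_cosh y, exp_neg_mul_tsum_tail_le hn ha han hy hyn]

lemma coshPoly_nonneg_s8 (n : ℕ) (y : ℝ) : 0 ≤ coshPoly n y :=
  sum_nonneg fun k _ ↦ div_nonneg ((even_two_mul k).pow_nonneg y) (by positivity)

theorem stmt8_general (α : ℕ → ℝ)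
    (hdiv : Filter.Tendsto α Filter.atTop Filter.atTop)
    (hslow : Filter.Tendsto (fun n : ℕ => α n * (n : ℝ) ^ (-(1 / 2) : ℝ))
      Filter.atTop (nhds 0)) :
    ∃ N₀ : ℕ, 0 < N₀ ∧ ∀ n : ℕ, N₀ < n → ∀ x : ℝ, 0 ≤ x →
      Real.exp (-(n * x)) * coshPoly n (n * x) ≥
        (1 / 2 - (1 / Real.sqrt (4 * Real.pi)) * (α n)⁻¹ * Real.exp (-(α n) ^ 2 / 4)) *
          (if x ≤ 2 - α n * (n : ℝ) ^ (-(1 / 2) : ℝ) then (1 : ℝ) else 0) := by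
  obtain ⟨N₁, hN₁⟩ := Filter.eventually_atTop.1 <| (hdiv.eventually_ge_atTop 4).and
    (hslow.eventually (gt_mem_nhds (by norm_num : (0 : ℝ) < 1 / 2)))
  refine ⟨max N₁ 11, by positivity, fun n hn x hx ↦ ?_⟩
  obtain ⟨ha, hsmall⟩ := hN₁ n (le_of_max_le_left hn.le)
  have hsn : √n * √n = n := mul_self_sqrt (Nat.cast_nonneg n)
  have hn11 : 11 ≤ n := le_of_max_le_right hn.le
  have hs0 : 0 < √(n : ℝ) := sqrt_pos.2 (Nat.cast_pos.2 (by omega))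
  rw [rpow_neg (Nat.cast_nonneg n), ← sqrt_eq_rpow] at hsmall ⊢
  split_ifs with hxn
  · have han : 2 * α n ≤ √n := by
      have := mul_lt_mul_of_pos_right hsmall hs0
      rw [inv_mul_cancel_right₀ hs0.ne'] at this
      linarith
    have hyn : n * x ≤ 2 * n - α n * √n := by
      calc n * x ≤ n * (2 - α n * (√n)⁻¹) := by gcongr
        _ = 2 * n - α n * √n := by field_simp; linear_combination α n * hsn
    rw [mul_one]
    exact sub_le_exp_neg_mul_coshPoly hn11 ha han (by positivity) hyn
  · rw [mul_zero]
    exact mul_nonneg (exp_pos _).le (coshPoly_nonneg_s8 _ _)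

theorem stmt8 (α : ℕ → ℝ) (hpos : ∀ n : ℕ, 1 ≤ n → 0 < α n)
    (hdiv : Filter.Tendsto α Filter.atTop Filter.atTop)
    (hslow : Filter.Tendsto (fun n : ℕ => α n * (n : ℝ) ^ (-(1 / 2) : ℝ))
      Filter.atTop (nhds 0)) :
    ∃ N₀ : ℕ, 0 < N₀ ∧ ∀ n : ℕ, N₀ < n → ∀ x : ℝ, 0 ≤ x →
      Real.exp (-(n * x)) * coshPoly n (n * x) ≥
        (1 / 2 - (1 / Real.sqrt (4 * Real.pi)) * (α n)⁻¹ * Real.exp (-(α n) ^ 2 / 4)) *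
          (if x ≤ 2 - α n * (n : ℝ) ^ (-(1 / 2) : ℝ) then (1 : ℝ) else 0) :=
  stmt8_general α hdiv hslow
end

section
/- Let $M_n$ be the $n\times n$ real symmetric matrix with entries $M_n(j,k) = \frac{1}{\sqrt{2\pi}}\,\frac{\Gamma(j+k-3/2)}{\sqrt{\Gamma(2j-1)\Gamma(2k-1)}}$ for $1\le j,k\le n$. Then for all positive integers $m$ and $n$, $\mathrm{Tr}(M_n^m) = \left(\frac{1}{2\pi}\right)^{m/2} \int_{\mathbb{R}^m} e^{-\sum_{k=1}^m y_k^2}\; \prod_{l=1}^{m} \cosh_{n-1}(y_l\, y_{l+1}) \; dy_1\cdots dy_m$, where the indices are cyclic, i.e. $y_{m+1} := y_1$. -/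
/-!
With `φ_k(x) = x^(2k) e^(-x²/2) / √((2k)!)`, the Gaussian moments
`∫ x^(2p) e^(-x²) = Γ(p + 1/2)` show that `√(2π) M_n` is the Gram matrix `(∫ φ_j φ_k)` of
`φ_0, …, φ_(n-1)`, while `e^(-(x² + y²)/2) cosh_(n-1)(xy) = ∑_k φ_k(x) φ_k(y)`. For the Gram
matrix `G` of any functions, expanding the cyclic product `∏_l ∑_i φ_i(y_l) φ_i(y_(l+1))` into a
sum over closed walks and integrating each `y_l` separately gives
`∑_walks ∏_l G(walk_l, walk_(l+1)) = Tr G^m`.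
-/

open Finset MeasureTheory Real
open scoped Nat

theorem Fin.prod_comp_add_one {M : Type*} [CommMonoid M] {m : ℕ} (f : Fin (m + 1) → M) :
    ∏ l, f (l + 1) = ∏ l, f l :=
  Fintype.prod_equiv (Equiv.addRight 1) _ _ fun _ => rfl

theorem Fin.cons_add_one {α : Type*} {m : ℕ} (a : α) (w : Fin m → α) (l : Fin (m + 1)) :
    (Fin.cons a w : Fin (m + 1) → α) (l + 1) = Fin.snoc (α := fun _ => α) w a l := by
  induction l using Fin.lastCases with
  | last => simp [Fin.last_add_one]
  | cast k => simp [Fin.coeSucc_eq_succ]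

namespace Matrix

variable {ι R : Type*} [Fintype ι] [DecidableEq ι] [CommSemiring R]

-- `Fin.cons i w` and `Fin.snoc w j` list the walk `i, w 0, …, w (m - 1), j` without its last,
-- respectively first, vertex.
theorem pow_succ_apply_eq_sum_prod (A : Matrix ι ι R) (m : ℕ) (i j : ι) :
    (A ^ (m + 1)) i j =
      ∑ w : Fin m → ι, ∏ l : Fin (m + 1),
        A (Fin.cons (α := fun _ => ι) i w l) (Fin.snoc (α := fun _ => ι) w j l) := by
  induction m generalizing i with
  | zero => simp [Fin.snoc_zero]
  | succ m ih =>
    rw [pow_succ', mul_apply, ← (Fin.consEquiv fun _ => ι).sum_comp, Fintype.sum_prod_type]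
    refine sum_congr rfl fun t _ => ?_
    rw [ih, mul_sum]
    refine sum_congr rfl fun w _ => ?_
    dsimp only [Fin.consEquiv, Equiv.coe_fn_mk]
    rw [← Fin.cons_snoc_eq_snoc_cons]
    simp [Fin.prod_univ_succ]

theorem trace_pow_succ_eq_sum_prod (A : Matrix ι ι R) (m : ℕ) :
    trace (A ^ (m + 1)) = ∑ d : Fin (m + 1) → ι, ∏ l, A (d l) (d (l + 1)) := by
  rw [← (Fin.consEquiv fun _ => ι).sum_comp, Fintype.sum_prod_type]
  refine sum_congr rfl fun i _ => ?_
  simp [pow_succ_apply_eq_sum_prod, Fin.cons_add_one]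

theorem trace_pow_succ_integral_mul_eq_integral_prod_sum {𝕜 α : Type*} [RCLike 𝕜]
    [MeasurableSpace α] (μ : Measure α) [SigmaFinite μ]
    (f : ι → α → 𝕜) (hf : ∀ i j, Integrable (fun x => f i x * f j x) μ) (m : ℕ) :
    trace ((of fun i j => ∫ x, f i x * f j x ∂μ) ^ (m + 1)) =
      ∫ y : Fin (m + 1) → α, ∏ l, ∑ i, f i (y l) * f i (y (l + 1))
        ∂Measure.pi fun _ => μ := by
  have hexpand (y : Fin (m + 1) → α) : ∏ l, ∑ i, f i (y l) * f i (y (l + 1)) =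
      ∑ d : Fin (m + 1) → ι, ∏ l, f (d (l - 1)) (y l) * f (d l) (y l) := by
    rw [Fintype.prod_sum]
    refine sum_congr rfl fun d _ => ?_
    rw [prod_mul_distrib, prod_mul_distrib, mul_comm,
      ← Fin.prod_comp_add_one fun l => f (d (l - 1)) (y l)]
    simp only [add_sub_cancel_right]
  simp_rw [hexpand]
  rw [integral_finsetSum _ fun d _ => Integrable.fintype_prod fun l => hf _ _,
    trace_pow_succ_eq_sum_prod]
  refine sum_congr rfl fun d _ => ?_
  rw [integral_fintype_prod_eq_prod (fun l x => f (d (l - 1)) x * f (d l) x),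
    ← Fin.prod_comp_add_one fun l => ∫ x, f (d (l - 1)) x * f (d l) x ∂μ]
  simp only [add_sub_cancel_right, of_apply]

end Matrix

theorem integrable_pow_mul_exp_neg_sq (k : ℕ) :
    Integrable fun x : ℝ => x ^ k * exp (-x ^ 2) := by
  simpa only [rpow_natCast, neg_one_mul] using
    integrable_rpow_mul_exp_neg_mul_sq one_pos (s := k) (by linarith [k.cast_nonneg (α := ℝ)])

theorem integral_pow_two_mul_mul_exp_neg_sq (p : ℕ) :
    ∫ x : ℝ, x ^ (2 * p) * exp (-x ^ 2) = Gamma (p + 1 / 2) := by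
  have heven (x : ℝ) : |x| ^ (2 * p) * exp (-|x| ^ 2) = x ^ (2 * p) * exp (-x ^ 2) := by
    rw [pow_mul, pow_mul, sq_abs]
  have h := integral_rpow_mul_exp_neg_rpow two_pos (q := (2 * p : ℕ))
    (by linarith [(2 * p).cast_nonneg (α := ℝ)])
  simp only [rpow_natCast, rpow_two] at h
  rw [← integral_congr_ae (ae_of_all _ heven), integral_comp_abs
    (f := fun x => x ^ (2 * p) * exp (-x ^ 2)), h]
  push_cast
  ring_nf

noncomputable def gaussEvenMonomial (k : ℕ) (x : ℝ) : ℝ :=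
  x ^ (2 * k) * exp (-x ^ 2 / 2) / √((2 * k)! : ℝ)

theorem gaussEvenMonomial_mul (j k : ℕ) (x : ℝ) :
    gaussEvenMonomial j x * gaussEvenMonomial k x =
      x ^ (2 * (j + k)) * exp (-x ^ 2) / √((2 * j)! * (2 * k)! : ℝ) := by
  rw [gaussEvenMonomial, gaussEvenMonomial, sqrt_mul (by positivity)]
  have hexp : exp (-x ^ 2) = exp (-x ^ 2 / 2) * exp (-x ^ 2 / 2) := by rw [← exp_add]; ring_nf
  rw [hexp]
  ring

theorem integrable_gaussEvenMonomial_mul (j k : ℕ) :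
    Integrable fun x => gaussEvenMonomial j x * gaussEvenMonomial k x := by
  simp_rw [gaussEvenMonomial_mul]
  exact (integrable_pow_mul_exp_neg_sq _).div_const _

theorem integral_gaussEvenMonomial_mul (j k : ℕ) :
    ∫ x, gaussEvenMonomial j x * gaussEvenMonomial k x =
      Gamma (j + k + 1 / 2) / √((2 * j)! * (2 * k)! : ℝ) := by
  simp_rw [gaussEvenMonomial_mul]
  rw [integral_div, integral_pow_two_mul_mul_exp_neg_sq]
  push_cast
  rfl

theorem ginibreM_eq_smul (n : ℕ) :
    ginibreM n = (√(2 * π))⁻¹ •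
      Matrix.of fun j k : Fin n => ∫ x, gaussEvenMonomial j x * gaussEvenMonomial k x := by
  ext j k
  have hfac (i : ℕ) : Gamma (2 * ((i : ℝ) + 1) - 1) = (2 * i)! := by
    rw [← Gamma_nat_eq_factorial]; push_cast; ring_nf
  simp only [ginibreM, Matrix.of_apply, Matrix.smul_apply, smul_eq_mul,
    integral_gaussEvenMonomial_mul, hfac]
  ring_nf

theorem sum_gaussEvenMonomial_mul (n : ℕ) (x y : ℝ) :
    ∑ k : Fin (n + 1), gaussEvenMonomial k x * gaussEvenMonomial k y =
      exp (-(x ^ 2 + y ^ 2) / 2) * coshPoly n (x * y) := by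
  rw [coshPoly, mul_sum,
    Fin.sum_univ_eq_sum_range (fun k => gaussEvenMonomial k x * gaussEvenMonomial k y)]
  refine sum_congr rfl fun k _ => ?_
  have hexp : exp (-(x ^ 2 + y ^ 2) / 2) = exp (-x ^ 2 / 2) * exp (-y ^ 2 / 2) := by
    rw [← exp_add]; ring_nf
  have hfac : √((2 * k)! : ℝ) * √((2 * k)! : ℝ) = (2 * k)! := mul_self_sqrt (by positivity)
  rw [gaussEvenMonomial, gaussEvenMonomial, div_mul_div_comm, hfac, hexp, mul_pow]
  ring

theorem prod_exp_neg_sq_add_sq_succ {m : ℕ} (y : Fin (m + 1) → ℝ) :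
    ∏ l, exp (-(y l ^ 2 + y (l + 1) ^ 2) / 2) = exp (-∑ l, y l ^ 2) := by
  rw [← exp_sum]
  congr 1
  simp only [neg_div, sum_neg_distrib, add_div, sum_add_distrib]
  rw [Fintype.sum_equiv (Equiv.addRight 1) (fun l => y (l + 1) ^ 2 / 2) (fun l => y l ^ 2 / 2)
      fun _ => rfl,
    ← sum_add_distrib]
  simp only [add_halves]

theorem one_div_rpow_natCast_div_two {x : ℝ} (hx : 0 ≤ x) (m : ℕ) :
    (1 / x) ^ ((m : ℝ) / 2) = (√x)⁻¹ ^ m := by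
  rw [rpow_div_two_eq_sqrt _ (one_div_nonneg.mpr hx), rpow_natCast, one_div, sqrt_inv]

theorem stmt9 (m n : ℕ) (hm : 0 < m) (hn : 0 < n) :
    Matrix.trace (ginibreM n ^ m) =
      (1 / (2 * Real.pi)) ^ ((m : ℝ) / 2) *
        ∫ y : Fin m → ℝ,
          Real.exp (-∑ k : Fin m, (y k) ^ 2) *
            ∏ l : Fin m, coshPoly (n - 1) (y l * y (l + ⟨1 % m, Nat.mod_lt 1 hm⟩)) := by
  obtain ⟨m, rfl⟩ := Nat.exists_eq_add_one_of_ne_zero hm.ne'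
  obtain ⟨n, rfl⟩ := Nat.exists_eq_add_one_of_ne_zero hn.ne'
  have hone : (⟨1 % (m + 1), Nat.mod_lt 1 hm⟩ : Fin (m + 1)) = 1 := rfl
  rw [hone, Nat.add_sub_cancel, ginibreM_eq_smul, smul_pow, Matrix.trace_smul,
    Matrix.trace_pow_succ_integral_mul_eq_integral_prod_sum volume
      (fun k : Fin (n + 1) => gaussEvenMonomial k) fun j k => integrable_gaussEvenMonomial_mul j k,
    one_div_rpow_natCast_div_two two_pi_pos.le, smul_eq_mul, volume_pi]
  congr 1
  refine integral_congr_ae (ae_of_all _ fun y => ?_)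
  simp only [sum_gaussEvenMonomial_mul, prod_mul_distrib, prod_exp_neg_sq_add_sq_succ]
end

section
/- For every positive integer $n$, the function $f_n : [0,\infty) \to \mathbb{R}$ defined by $f_n(x) = e^{-nx}\,\cosh_n(nx)$ is monotonically decreasing on $[0,\infty)$: for all $0 \le x \le y$, $f_n(y) \le f_n(x)$. -/
/-!
Write `P(x) = ∑_{j ≤ 2n} x^j / j!`. Then `cosh_n(x) = (P(x) + P(-x)) / 2` and
`P' = P - x^{2n}/(2n)!`, so `d/dt (e^{-t} cosh_n t) = -e^{-t} P(-t)`. An even-degree Taylor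
polynomial of `exp` is nonnegative: trivially for `x ≥ 0`, and for `x ≤ 0` because `e^{-s} P(s)`
has derivative `-e^{-s} s^{2n}/(2n)! ≤ 0`, whence `P(x) ≥ e^x`. Hence `t ↦ e^{-t} cosh_n t` is
antitone on all of `ℝ`.
-/

open Finset Nat Real

-- Degree `m - 1`: the sum runs over `i < m`, as in `Real.sum_le_exp_of_nonneg`.
noncomputable def expTaylor (m : ℕ) (x : ℝ) : ℝ :=
  ∑ i ∈ range m, x ^ i / i !

lemma expTaylor_succ (m : ℕ) (x : ℝ) : expTaylor (m + 1) x = expTaylor m x + x ^ m / m ! :=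
  sum_range_succ _ _

lemma hasDerivAt_expTaylor_succ (m : ℕ) (x : ℝ) :
    HasDerivAt (expTaylor (m + 1)) (expTaylor m x) x := by
  induction m with
  | zero =>
    rw [show expTaylor 1 = fun _ => 1 by funext; simp [expTaylor]]
    simpa [expTaylor] using hasDerivAt_const x (1 : ℝ)
  | succ m ih =>
    have hpow : HasDerivAt (fun y : ℝ => y ^ (m + 1) / (m + 1)!) (x ^ m / m !) x := by
      refine ((hasDerivAt_pow (m + 1) x).div_const ((m + 1)! : ℝ)).congr_deriv ?_
      rw [add_tsub_cancel_right, factorial_succ, cast_mul]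
      field_simp
    rw [funext (expTaylor_succ (m + 1)), expTaylor_succ]
    exact ih.fun_add hpow

lemma expTaylor_succ_zero (m : ℕ) : expTaylor (m + 1) 0 = 1 := by
  simp [expTaylor, sum_range_succ']

lemma exp_le_expTaylor_of_nonpos {m : ℕ} (hm : Even m) {x : ℝ} (hx : x ≤ 0) :
    exp x ≤ expTaylor (m + 1) x := by
  have hderiv : ∀ s, HasDerivAt (fun s => exp (-s) * expTaylor (m + 1) s)
      (-(exp (-s) * (s ^ m / m !))) s := fun s =>
    ((hasDerivAt_neg s).exp.fun_mul (hasDerivAt_expTaylor_succ m s)).congr_deriv (by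
      rw [expTaylor_succ]; ring)
  have hanti : Antitone (fun s => exp (-s) * expTaylor (m + 1) s) :=
    antitone_of_hasDerivAt_nonpos hderiv fun s =>
      neg_nonpos.mpr (mul_nonneg (exp_pos _).le (div_nonneg (hm.pow_nonneg s) (by positivity)))
  have h : 1 ≤ (exp x)⁻¹ * expTaylor (m + 1) x := by
    simpa [expTaylor_succ_zero, exp_neg] using hanti hx
  simpa using (le_inv_mul_iff₀ (exp_pos x)).mp h

lemma expTaylor_nonneg {m : ℕ} (hm : Even m) (x : ℝ) : 0 ≤ expTaylor (m + 1) x := by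
  rcases le_total 0 x with hx | hx
  · exact sum_nonneg fun i _ => by positivity
  · exact (exp_pos x).le.trans (exp_le_expTaylor_of_nonpos hm hx)

lemma coshPoly_eq_expTaylor (n : ℕ) (x : ℝ) :
    coshPoly n x = (expTaylor (2 * n + 1) x + expTaylor (2 * n + 1) (-x)) / 2 := by
  induction n with
  | zero => simp [coshPoly, expTaylor]
  | succ n ih =>
    rw [coshPoly, sum_range_succ, ← coshPoly, ih, show 2 * (n + 1) + 1 = 2 * n + 1 + 1 + 1 by ring,
      show 2 * (n + 1) = 2 * n + 1 + 1 by ring]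
    simp only [expTaylor_succ]
    rw [(even_two_mul n).neg_pow, Odd.neg_pow ⟨n, rfl⟩, Even.neg_pow ⟨n + 1, by ring⟩]
    ring

lemma hasDerivAt_coshPoly (n : ℕ) (x : ℝ) :
    HasDerivAt (coshPoly n) ((expTaylor (2 * n + 1) x - expTaylor (2 * n + 1) (-x)) / 2) x := by
  have hP := hasDerivAt_expTaylor_succ (2 * n) x
  have hPneg := (hasDerivAt_expTaylor_succ (2 * n) (-x)).comp x (hasDerivAt_neg x)
  rw [funext (coshPoly_eq_expTaylor n)]
  refine ((hP.fun_add hPneg).div_const 2).congr_deriv ?_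
  rw [expTaylor_succ, expTaylor_succ, (even_two_mul n).neg_pow]
  ring

lemma hasDerivAt_exp_neg_mul_coshPoly (n : ℕ) (t : ℝ) :
    HasDerivAt (fun t => exp (-t) * coshPoly n t)
      (-(exp (-t) * expTaylor (2 * n + 1) (-t))) t :=
  ((hasDerivAt_neg t).exp.fun_mul (hasDerivAt_coshPoly n t)).congr_deriv (by
    rw [coshPoly_eq_expTaylor]; ring)

lemma antitone_exp_neg_mul_coshPoly (n : ℕ) : Antitone (fun t => exp (-t) * coshPoly n t) :=
  antitone_of_hasDerivAt_nonpos (hasDerivAt_exp_neg_mul_coshPoly n) fun _ =>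
    neg_nonpos.mpr (mul_nonneg (exp_pos _).le (expTaylor_nonneg (even_two_mul n) _))

theorem stmt13_general (n : ℕ) :
    ∀ x y : ℝ, 0 ≤ x → x ≤ y →
      Real.exp (-(n * y)) * coshPoly n (n * y) ≤
        Real.exp (-(n * x)) * coshPoly n (n * x) :=
  fun _ _ _ hxy => antitone_exp_neg_mul_coshPoly n (mul_le_mul_of_nonneg_left hxy n.cast_nonneg)

theorem stmt13 (n : ℕ) (hn : 0 < n) :
    ∀ x y : ℝ, 0 ≤ x → x ≤ y →
      Real.exp (-(n * y)) * coshPoly n (n * y) ≤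
        Real.exp (-(n * x)) * coshPoly n (n * x) :=
  stmt13_general n
end

section
/- Let $M$ be a real symmetric positive definite $N\times N$ matrix whose largest eigenvalue $\lambda_{\max}$ satisfies $\lambda_{\max} < 1$. Then for every positive integer $K$, $\left| \log\det(I_N - M) + \sum_{m=1}^{K} \frac{1}{m}\,\mathrm{Tr}(M^m) \right| \le N\,\lambda_{\max}^{K}\, \log\!\left(\frac{1}{1 - \lambda_{\max}}\right)$. -/
/-!
Diagonalising `A`, both sides split over the eigenvalues `λᵢ ∈ (0, λ_max]`, and the claim reduces
to the scalar estimate `|log (1 - x) + ∑_{m ≤ K} xᵐ / m| ≤ L^K log (1 / (1 - L))` for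
`0 ≤ x ≤ L < 1`. The left side is the tail `∑_{m > K} xᵐ / m` of the series of `-log (1 - x)`,
and termwise `x^(n+K+1) / (n+K+1) ≤ x^K · x^(n+1) / (n+1)`, so the tail is at most
`x^K (-log (1 - x))`, which is monotone in `x`.
-/

open Finset

namespace Matrix.IsHermitian

variable {𝕜 n : Type*} [RCLike 𝕜] [Fintype n] [DecidableEq n] {A : Matrix n n 𝕜}

theorem trace_cfc (hA : A.IsHermitian) (f : ℝ → ℝ) :
    (cfc f A).trace = ∑ i, (f (hA.eigenvalues i) : 𝕜) := by
  rw [hA.cfc_eq, IsHermitian.cfc, Unitary.conjStarAlgAut_apply, trace_mul_cycle,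
    Unitary.coe_star_mul_self]
  simp

theorem det_cfc (hA : A.IsHermitian) (f : ℝ → ℝ) :
    (cfc f A).det = ∏ i, (f (hA.eigenvalues i) : 𝕜) := by
  rw [hA.cfc_eq, IsHermitian.cfc, Unitary.conjStarAlgAut_apply, det_mul_comm, ← mul_assoc,
    Unitary.coe_star_mul_self]
  simp

theorem trace_pow (hA : A.IsHermitian) (m : ℕ) :
    (A ^ m).trace = ∑ i, (hA.eigenvalues i : 𝕜) ^ m := by
  rw [← cfc_pow_id (R := ℝ) A m hA.isSelfAdjoint, hA.trace_cfc]
  simp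

theorem det_one_sub (hA : A.IsHermitian) :
    (1 - A).det = ∏ i, (1 - hA.eigenvalues i : 𝕜) := by
  have h : 1 - A = cfc (fun x : ℝ => 1 - x) A := by
    rw [cfc_sub .., cfc_const_one .., cfc_id' ..]
  rw [h, hA.det_cfc]
  simp

end Matrix.IsHermitian

namespace Real

theorem sum_Icc_one_div_mul_pow (x : ℝ) (K : ℕ) :
    ∑ m ∈ Icc 1 K, 1 / (m : ℝ) * x ^ m = ∑ n ∈ range K, x ^ (n + 1) / (n + 1) := by
  rw [← Ico_add_one_right_eq_Icc, sum_Ico_eq_sum_range, Nat.add_sub_cancel]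
  refine sum_congr rfl fun n _ => ?_
  push_cast
  ring

theorem neg_log_one_sub_sub_sum_range_mem_Icc {x : ℝ} (hx₀ : 0 ≤ x) (hx₁ : x < 1) (K : ℕ) :
    -log (1 - x) - ∑ n ∈ range K, x ^ (n + 1) / (n + 1) ∈
      Set.Icc 0 (x ^ K * -log (1 - x)) := by
  have hs := hasSum_pow_div_log_of_abs_lt_one (abs_lt.mpr ⟨by linarith, hx₁⟩)
  have htail : HasSum (fun n : ℕ => x ^ (n + K + 1) / ((n + K : ℕ) + 1))
      (-log (1 - x) - ∑ n ∈ range K, x ^ (n + 1) / (n + 1)) := by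
    rw [hasSum_nat_add_iff (f := fun n : ℕ => x ^ (n + 1) / (n + 1)) K, sub_add_cancel]
    exact hs
  refine ⟨htail.nonneg fun n => by positivity, hasSum_le (fun n => ?_) htail (hs.mul_left _)⟩
  rw [show x ^ (n + K + 1) = x ^ K * x ^ (n + 1) by ring, mul_div_assoc]
  gcongr
  omega

theorem abs_log_one_sub_add_sum_Icc_le {x L : ℝ} (hx₀ : 0 ≤ x) (hxL : x ≤ L) (hL : L < 1)
    (K : ℕ) :
    |log (1 - x) + ∑ m ∈ Icc 1 K, 1 / (m : ℝ) * x ^ m| ≤ L ^ K * log (1 / (1 - L)) := by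
  obtain ⟨htail₀, htail₁⟩ := neg_log_one_sub_sub_sum_range_mem_Icc hx₀ (hxL.trans_lt hL) K
  have hmono : x ^ K * -log (1 - x) ≤ L ^ K * -log (1 - L) :=
    mul_le_mul (pow_le_pow_left₀ hx₀ hxL K) (neg_le_neg (log_le_log (by linarith) (by linarith)))
      (neg_nonneg.mpr (log_nonpos (by linarith) (by linarith))) (pow_nonneg (hx₀.trans hxL) K)
  rw [sum_Icc_one_div_mul_pow, one_div, log_inv, abs_le]
  constructor <;> linarith

end Real

theorem stmt16_general (N : ℕ) (A : Matrix (Fin N) (Fin N) ℝ)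
    (hpd : A.PosDef) (lammax : ℝ)
    (hmax : ∀ μ ∈ spectrum ℝ A, μ ≤ lammax) (hlt : lammax < 1)
    (K : ℕ) :
    |Real.log (Matrix.det (1 - A)) +
        ∑ m ∈ Finset.Icc 1 K, (1 / (m : ℝ)) * Matrix.trace (A ^ m)| ≤
      (N : ℝ) * lammax ^ K * Real.log (1 / (1 - lammax)) := by
  have hA := hpd.isHermitian
  set ev := hA.eigenvalues
  have hev_le : ∀ i, ev i ≤ lammax := fun i => hmax _ (hA.eigenvalues_mem_spectrum_real i)
  have hlog : Real.log (1 - A).det = ∑ i, Real.log (1 - ev i) := by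
    rw [hA.det_one_sub]
    exact Real.log_prod fun i _ => (sub_pos.mpr ((hev_le i).trans_lt hlt)).ne'
  have hsum : ∑ m ∈ Icc 1 K, 1 / (m : ℝ) * (A ^ m).trace =
      ∑ i, ∑ m ∈ Icc 1 K, 1 / (m : ℝ) * ev i ^ m := by
    simp_rw [hA.trace_pow, mul_sum]
    exact sum_comm
  rw [hlog, hsum, ← sum_add_distrib]
  calc _ ≤ ∑ i, |Real.log (1 - ev i) + ∑ m ∈ Icc 1 K, 1 / (m : ℝ) * ev i ^ m| :=
        abs_sum_le_sum_abs _ _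
    _ ≤ ∑ _i : Fin N, lammax ^ K * Real.log (1 / (1 - lammax)) :=
        sum_le_sum fun i _ =>
          Real.abs_log_one_sub_add_sum_Icc_le (hpd.eigenvalues_pos i).le (hev_le i) hlt K
    _ = _ := by simp [mul_assoc]

theorem stmt16 (N : ℕ) (A : Matrix (Fin N) (Fin N) ℝ) (hsymm : A.IsSymm)
    (hpd : A.PosDef) (lammax : ℝ) (hmem : lammax ∈ spectrum ℝ A)
    (hmax : ∀ μ ∈ spectrum ℝ A, μ ≤ lammax) (hlt : lammax < 1)
    (K : ℕ) (hK : 0 < K) :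
    |Real.log (Matrix.det (1 - A)) +
        ∑ m ∈ Finset.Icc 1 K, (1 / (m : ℝ)) * Matrix.trace (A ^ m)| ≤
      (N : ℝ) * lammax ^ K * Real.log (1 / (1 - lammax)) :=
  stmt16_general N A hpd lammax hmax hlt K
end
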